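/- Conjugate-reflection-type ambiguity for even d: let d be even, m ∈ ℤ, ρ ∈ (−π, π), and define x^1, x^2 ∈ ℂ^d by x^q_k = e^{−2πi km/d} for k even and x^q_k = −(−1)^q e^{(−1)^q iρ/2} e^{−2πi km/d} for k odd (q = 1, 2). Then conj(x^1_{−k}) = (−1)^k x^2_k for all k, and for every j ∈ [d] the Fourier coefficients of the j-th diagonals of x^1 and x^2 agree at every nonzero frequency: (F[x^1 ∘ S_j conj(x^1)])_k = (F[x^2 ∘ S_j conj(x^2)])_k for all k ∈ [d] \ {0}. -/

import Mathlib

/-!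
Write `ψ(k) = e^{-2πi km/d}`, an additive character of `ℤ/d`, and `w_c(k) = 1` for even `k`,
`w_c(k) = c` for odd `k`; parity is additive on `ℤ/d` because `d` is even. With `c = e^{-iρ/2}`
we have `x¹ = w_c ψ` and `x² = w_{-c̄} ψ`, and the reflection identity follows from
`conj ψ(-k) = ψ(k)`. On the `j`-th diagonal the character contributes the common factor
`conj ψ(j)`, while `w_c(ℓ) conj w_c(ℓ+j) - w_{-c̄}(ℓ) conj w_{-c̄}(ℓ+j)` equals `0` for even `j`
and `c + c̄` for odd `j`, whatever the parity of `ℓ`. So the two diagonals differ by a constant,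
and the DFT of a constant vanishes at every nonzero frequency.
-/

open Complex Finset

noncomputable def dft (d : ℕ) [NeZero d] (x : ZMod d → ℂ) (j : ZMod d) : ℂ :=
  ∑ k : ZMod d, Complex.exp (-(2 * Real.pi * Complex.I * k.val * j.val / d)) * x k

/-- The Fourier transform of the j-th diagonal x ∘ S_j conj(x). -/
noncomputable def diagDFT (d : ℕ) [NeZero d] (x : ZMod d → ℂ) (j k : ZMod d) : ℂ :=
  dft d (fun ℓ => x ℓ * (starRingEnd ℂ) (x (ℓ + j))) k

/-- The ambiguity objects x^q (q = 1, 2) from the conjugate-reflection-type negative example. -/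
noncomputable def xamb (d : ℕ) [NeZero d] (m : ℤ) (ρ : ℝ) (q : ℕ) (k : ZMod d) : ℂ :=
  if Even k.val then Complex.exp (-(2 * Real.pi * Complex.I * k.val * m / d))
  else -(-1 : ℂ) ^ q * Complex.exp ((-1 : ℂ) ^ q * Complex.I * ρ / 2)
        * Complex.exp (-(2 * Real.pi * Complex.I * k.val * m / d))

open ZMod ComplexConjugate

namespace ZMod

variable {N : ℕ} [NeZero N] {E : Type*} [AddCommGroup E] [Module ℂ E]

lemma dft_const_apply_of_ne_zero (c : E) {k : ZMod N} (hk : k ≠ 0) :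
    𝓕 (fun _ ↦ c) k = 0 := by
  have hsum : ∑ j : ZMod N, stdAddChar (j * -k) = 0 := by
    rw [AddChar.sum_mulShift _ (isPrimitive_stdAddChar N), if_neg (neg_ne_zero.mpr hk),
      Nat.cast_zero]
  simp only [dft_apply, ← Finset.sum_smul, ← mul_neg, hsum, zero_smul]

lemma dft_apply_eq_of_sub_eq_const {Φ Ψ : ZMod N → E} {c : E} (h : ∀ j, Φ j - Ψ j = c)
    {k : ZMod N} (hk : k ≠ 0) : 𝓕 Φ k = 𝓕 Ψ k := by
  have hΦ : Φ = Ψ + fun _ ↦ c := funext fun j ↦ by simp [← h j]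
  rw [hΦ, map_add, Pi.add_apply, dft_const_apply_of_ne_zero c hk, add_zero]

lemma even_val_add (hN : Even N) (a b : ZMod N) :
    Even (a + b).val ↔ (Even a.val ↔ Even b.val) := by
  rw [val_add, hN.mod_even_iff, Nat.even_add]

lemma even_val_neg (hN : Even N) (a : ZMod N) : Even (-a).val ↔ Even a.val := by
  rw [neg_val]
  split_ifs with ha
  · simp [ha]
  · rw [Nat.even_sub a.val_lt.le]
    simp [hN]

end ZMod

lemma dft_eq_zmod_dft {d : ℕ} [NeZero d] (x : ZMod d → ℂ) : dft d x = 𝓕 x := by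
  ext k
  refine Finset.sum_congr rfl fun ℓ _ ↦ ?_
  have hcast : -(ℓ * k) = ((-(ℓ.val * k.val) : ℤ) : ZMod d) := by
    push_cast
    simp only [natCast_zmod_val]
  rw [smul_eq_mul, hcast, stdAddChar_coe]
  push_cast
  ring_nf

lemma AddChar.coe_mul_conj_coe_add {A : Type*} [AddCommGroup A] (ψ : AddChar A Circle)
    (a b : A) :
    (ψ a : ℂ) * conj (ψ (a + b) : ℂ) = conj (ψ b : ℂ) := by
  rw [← Circle.coe_inv_eq_conj, ← Circle.coe_inv_eq_conj, ← Circle.coe_mul,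
    AddChar.map_add_eq_mul, mul_inv_rev, mul_comm (ψ b)⁻¹, mul_inv_cancel_left]

section ParityWeight

variable {d : ℕ}

def parityWeight (c : ℂ) (k : ZMod d) : ℂ := if Even k.val then 1 else c

lemma parityWeight_mul_conj_sub [NeZero d] (hd : Even d) (c : ℂ) (ℓ j : ZMod d) :
    parityWeight c ℓ * conj (parityWeight c (ℓ + j))
      - parityWeight (-conj c) ℓ * conj (parityWeight (-conj c) (ℓ + j))
      = if Even j.val then 0 else c + conj c := by
  simp only [parityWeight, even_val_add hd]
  by_cases hℓ : Even ℓ.val <;> by_cases hj : Even j.val <;>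
    simp only [hℓ, hj, iff_true, iff_false, not_true_eq_false, ↓reduceIte, map_one, map_neg,
      Complex.conj_conj] <;> ring

noncomputable def parityTwisted (c : ℂ) (ψ : AddChar (ZMod d) Circle) (k : ZMod d) : ℂ :=
  parityWeight c k * ψ k

lemma conj_parityTwisted_neg [NeZero d] (hd : Even d) (c : ℂ) (ψ : AddChar (ZMod d) Circle)
    (k : ZMod d) :
    conj (parityTwisted c ψ (-k)) = (-1) ^ k.val * parityTwisted (-conj c) ψ k := by
  have hψ : conj (ψ (-k) : ℂ) = ψ k := by
    rw [← Circle.coe_inv_eq_conj, AddChar.map_neg_eq_inv, inv_inv]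
  simp only [parityTwisted, map_mul, hψ, parityWeight, even_val_neg hd]
  by_cases hk : Even k.val
  · simp [hk, hk.neg_one_pow]
  · simp [hk, (Nat.not_even_iff_odd.mp hk).neg_one_pow]

lemma parityTwisted_mul_conj_sub [NeZero d] (hd : Even d) (c : ℂ) (ψ : AddChar (ZMod d) Circle)
    (ℓ j : ZMod d) :
    parityTwisted c ψ ℓ * conj (parityTwisted c ψ (ℓ + j))
      - parityTwisted (-conj c) ψ ℓ * conj (parityTwisted (-conj c) ψ (ℓ + j))
      = (if Even j.val then 0 else c + conj c) * conj (ψ j : ℂ) := by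
  calc _ = (parityWeight c ℓ * conj (parityWeight c (ℓ + j))
        - parityWeight (-conj c) ℓ * conj (parityWeight (-conj c) (ℓ + j)))
          * ((ψ ℓ : ℂ) * conj (ψ (ℓ + j) : ℂ)) := by
        simp only [parityTwisted, map_mul]
        ring
    _ = _ := by rw [parityWeight_mul_conj_sub hd, AddChar.coe_mul_conj_coe_add]

lemma diagDFT_parityTwisted [NeZero d] (hd : Even d) (c : ℂ) (ψ : AddChar (ZMod d) Circle)
    (j : ZMod d) {k : ZMod d} (hk : k ≠ 0) :
    diagDFT d (parityTwisted c ψ) j k = diagDFT d (parityTwisted (-conj c) ψ) j k := by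
  rw [diagDFT, diagDFT, dft_eq_zmod_dft, dft_eq_zmod_dft]
  exact dft_apply_eq_of_sub_eq_const (fun ℓ ↦ parityTwisted_mul_conj_sub hd c ψ ℓ j) hk

end ParityWeight

lemma xamb_eq_parityTwisted (d : ℕ) [NeZero d] (m : ℤ) (ρ : ℝ) (q : ℕ) :
    xamb d m ρ q = parityTwisted (-(-1) ^ q * exp ((-1) ^ q * I * ρ / 2))
      (toCircle.mulShift ((-m : ℤ) : ZMod d)) := by
  funext k
  have hψ : exp (-(2 * Real.pi * I * k.val * m / d))
      = toCircle.mulShift ((-m : ℤ) : ZMod d) k := by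
    have hcast : ((-m : ℤ) : ZMod d) * k = ((-(k.val * m) : ℤ) : ZMod d) := by
      push_cast
      rw [natCast_zmod_val]
      ring
    rw [AddChar.mulShift_apply, hcast, toCircle_intCast]
    push_cast
    ring_nf
  rw [xamb, parityTwisted, parityWeight, hψ]
  split_ifs <;> ring

theorem conj_reflection_ambiguity_general (d : ℕ) [NeZero d] (hd : Even d) (m : ℤ) (ρ : ℝ) :
    (∀ k : ZMod d,
      (starRingEnd ℂ) (xamb d m ρ 1 (-k)) = (-1 : ℂ) ^ k.val * xamb d m ρ 2 k)
    ∧ (∀ j k : ZMod d, k ≠ 0 →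
        diagDFT d (xamb d m ρ 1) j k = diagDFT d (xamb d m ρ 2) j k) := by
  set c : ℂ := -(-1) ^ 1 * exp ((-1) ^ 1 * I * ρ / 2)
  have hc : -(-1) ^ 2 * exp ((-1) ^ 2 * I * ρ / 2) = -conj c := by
    simp only [c, map_neg, map_mul, ← exp_conj, map_div₀, conj_I, conj_ofReal, map_pow,
      map_one, map_ofNat]
    ring_nf
  rw [xamb_eq_parityTwisted, xamb_eq_parityTwisted, hc]
  exact ⟨conj_parityTwisted_neg hd c _, fun j k hk ↦ diagDFT_parityTwisted hd c _ j hk⟩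

/-- Conjugate-reflection-type ambiguity for even d: conj(x¹_{−k}) = (−1)^k x²_k, and the
Fourier coefficients of all diagonals of x¹ and x² agree at every nonzero frequency. -/
theorem conj_reflection_ambiguity (d : ℕ) [NeZero d] (hd : Even d) (m : ℤ) (ρ : ℝ)
    (hρ : -Real.pi < ρ ∧ ρ < Real.pi) :
    (∀ k : ZMod d,
      (starRingEnd ℂ) (xamb d m ρ 1 (-k)) = (-1 : ℂ) ^ k.val * xamb d m ρ 2 k)
    ∧ (∀ j k : ZMod d, k ≠ 0 →
        diagDFT d (xamb d m ρ 1) j k = diagDFT d (xamb d m ρ 2) j k) :=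
  conj_reflection_ambiguity_general d hd m ρ
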